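/- Let f be an odd positive integer, χ a Dirichlet character modulo f, r ≥ 1 an integer, q real with 0 < q < 1, x, w_1, …, w_r positive real numbers, and a_1, …, a_r positive real numbers. For s ∈ ℂ define the Barnes-type multiple q-l-function l_{q,χ}^{(r)}(s, x|w_1,…,w_r; a_1,…,a_r) = 2^r Σ_{(m_1,…,m_r)∈ℕ^r} (∏_{j=1}^r χ(m_j)) (-1)^{m_1+⋯+m_r} q^{a_1 m_1 + ⋯ + a_r m_r} [x + w_1 m_1 + ⋯ + w_r m_r]_q^{-s}. Then this series converges absolutely for every s ∈ ℂ, and for every integer n ≥ 0 one has l_{q,χ}^{(r)}(-n, x|w_1,…,w_r; a_1,…,a_r) = (2^r/(1-q)^n) Σ_{l=0}^n C(n,l)(-1)^l q^{lx} Σ_{(b_1,…,b_r)∈{0,…,f-1}^r} (∏_{i=1}^r χ(b_i)) (-1)^{b_1+⋯+b_r} q^{Σ_{i=1}^r (l w_i + a_i) b_i} / ∏_{j=1}^r (1 + q^{(l w_j + a_j) f}). -/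

import Mathlib

/-!
Expanding `[y]_q ^ n = (1 - q)⁻ⁿ ∑ₗ C(n,l) (-1)ˡ q^(l y)` by the binomial theorem turns the
summand at `s = -n` into a combination of products of one-variable series
`∑ₘ χ(m) (-q^c)^m` with `c = l wⱼ + aⱼ > 0`. As `χ` is `f`-periodic and `f` is odd, grouping `m`
by its residue mod `f` makes each of them a geometric series in `-q^(c f)`, with sum
`(∑_{b<f} χ(b) (-q^c)^b) / (1 + q^(c f))`.

Absolute convergence holds for every `s` because `[x + ∑ wᵢ mᵢ]_q` stays in `[[x]_q, 1/(1-q)]`,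
so its complex powers are bounded, while the weights `q^(∑ aᵢ mᵢ)` decay geometrically.
-/

open Finset

/-- The `q`-analogue `[y]_q = (1 - q^y)/(1 - q)` (real power). -/
noncomputable def qnum (q y : ℝ) : ℝ := (1 - q ^ y) / (1 - q)

theorem summable_prod_pi_of_nonneg {β : Type*} {r : ℕ} (g : Fin r → β → ℝ)
    (hg0 : ∀ j b, 0 ≤ g j b) (hg : ∀ j, Summable (g j)) :
    Summable fun m : Fin r → β => ∏ j, g j (m j) := by
  induction r with
  | zero => exact .of_finite
  | succ r ih =>
    rw [← (Fin.consEquiv fun _ => β).summable_iff]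
    simpa [Function.comp_def, Fin.consEquiv, Fin.prod_univ_succ] using
      (hg 0).mul_of_nonneg (ih _ (fun j => hg0 j.succ) fun j => hg j.succ) (hg0 0)
        fun m => prod_nonneg fun j _ => hg0 j.succ (m j)

theorem hasSum_prod_pi {R β : Type*} [NormedCommRing R] [NormMulClass R] [NormOneClass R]
    [CompleteSpace R] {r : ℕ} (g : Fin r → β → R) (hg : ∀ j, Summable fun b => ‖g j b‖) :
    HasSum (fun m : Fin r → β => ∏ j, g j (m j)) (∏ j, ∑' b, g j b) := by
  induction r with
  | zero => simp
  | succ r ih =>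
    have htail : Summable fun m : Fin r → β => ‖∏ j, g j.succ (m j)‖ := by
      simpa only [norm_prod] using
        summable_prod_pi_of_nonneg _ (fun j b => norm_nonneg (g j.succ b)) fun j => hg j.succ
    rw [← (Fin.consEquiv fun _ => β).hasSum_iff, Fin.prod_univ_succ,
      ← (ih _ fun j => hg j.succ).tsum_eq, tsum_mul_tsum_of_summable_norm (hg 0) htail]
    simpa [Function.comp_def, Fin.consEquiv, Fin.prod_univ_succ] using
      (summable_mul_of_summable_norm (hg 0) htail).hasSum

theorem summable_norm_mul_pow_of_zmod {N : ℕ} [NeZero N] (Φ : ZMod N → ℂ) {z : ℂ}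
    (hz : ‖z‖ < 1) : Summable fun m : ℕ => ‖Φ m * z ^ m‖ := by
  refine .of_nonneg_of_le (fun _ => norm_nonneg _) (fun m => ?_)
    ((summable_geometric_of_lt_one (norm_nonneg z) hz).mul_left (∑ j, ‖Φ j‖))
  rw [norm_mul, norm_pow]
  gcongr
  exact single_le_sum (fun j _ => norm_nonneg (Φ j)) (mem_univ _)

theorem hasSum_mul_pow_of_zmod {N : ℕ} [NeZero N] (Φ : ZMod N → ℂ) {z : ℂ} (hz : ‖z‖ < 1) :
    HasSum (fun m : ℕ => Φ m * z ^ m) ((∑ b : Fin N, Φ (b : ℕ) * z ^ (b : ℕ)) / (1 - z ^ N)) := by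
  have hzN : ‖z ^ N‖ < 1 := by
    rw [norm_pow]; exact pow_lt_one₀ (norm_nonneg z) hz (NeZero.ne N)
  have hgeom : Summable fun k : ℕ => ‖(z ^ N) ^ k‖ := by
    simpa [norm_pow] using summable_geometric_of_lt_one (norm_nonneg _) hzN
  have hfin : Summable fun b : Fin N => ‖Φ (b : ℕ) * z ^ (b : ℕ)‖ := .of_finite
  rw [← (Nat.divModEquiv N).symm.hasSum_iff, div_eq_inv_mul, ← tsum_geometric_of_norm_lt_one hzN,
    ← tsum_fintype (L := .unconditional _) fun b : Fin N => Φ (b : ℕ) * z ^ (b : ℕ),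
    tsum_mul_tsum_of_summable_norm hgeom hfin]
  refine (summable_mul_of_summable_norm hgeom hfin).hasSum.congr_fun fun ⟨k, b⟩ => ?_
  simp only [Function.comp_apply, Nat.divModEquiv_symm_apply]
  push_cast
  rw [ZMod.natCast_self, mul_zero, zero_add, pow_add, mul_comm k, pow_mul]
  ring

theorem rpow_sum_mul_natCast {ι : Type*} (s : Finset ι) {q : ℝ} (hq : 0 < q) (c : ι → ℝ)
    (m : ι → ℕ) : q ^ (∑ i ∈ s, c i * m i) = ∏ i ∈ s, (q ^ c i) ^ m i := by
  rw [Real.rpow_sum_of_pos hq]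
  exact prod_congr rfl fun i _ => Real.rpow_mul_natCast hq.le _ _

theorem norm_neg_rpow_lt_one {q c : ℝ} (hq0 : 0 < q) (hq1 : q < 1) (hc : 0 < c) :
    ‖-((q ^ c : ℝ) : ℂ)‖ < 1 := by
  rw [norm_neg, Complex.norm_real, Real.norm_of_nonneg (Real.rpow_nonneg hq0.le c)]
  exact Real.rpow_lt_one hq0.le hq1 hc

theorem rpow_le_max_of_mem_Icc {ε M y : ℝ} (hε : 0 < ε) (hy : y ∈ Set.Icc ε M) (t : ℝ) :
    y ^ t ≤ max (ε ^ t) (M ^ t) := by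
  rcases le_total 0 t with ht | ht
  · exact le_max_of_le_right (Real.rpow_le_rpow (hε.le.trans hy.1) hy.2 ht)
  · exact le_max_of_le_left (Real.rpow_le_rpow_of_nonpos hε hy.1 ht)

theorem prod_mul_neg_rpow_pow {ι : Type*} [Fintype ι] {N : ℕ} (Φ : ZMod N → ℂ) {q : ℝ}
    (hq : 0 < q) (c : ι → ℝ) (m : ι → ℕ) :
    ∏ j, Φ (m j) * (-((q ^ c j : ℝ) : ℂ)) ^ m j =
      (∏ j, Φ (m j)) * (-1 : ℂ) ^ (∑ i, m i) * ((q ^ (∑ i, c i * m i) : ℝ) : ℂ) := by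
  simp only [neg_pow (((q ^ c _ : ℝ)) : ℂ), rpow_sum_mul_natCast _ hq, prod_mul_distrib,
    prod_pow_eq_pow_sum, Complex.ofReal_prod, Complex.ofReal_pow]
  ring

theorem qnum_pow {q : ℝ} (hq : 0 ≤ q) (y : ℝ) (n : ℕ) :
    qnum q y ^ n =
      ((1 - q) ^ n)⁻¹ * ∑ l ∈ range (n + 1), (n.choose l : ℝ) * (-1) ^ l * q ^ ((l : ℝ) * y) := by
  rw [qnum, div_pow, div_eq_inv_mul, sub_eq_neg_add 1 (q ^ y), add_pow]
  congr 1
  refine sum_congr rfl fun l _ => ?_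
  rw [mul_comm (l : ℝ), Real.rpow_mul_natCast hq, neg_pow]
  ring

theorem qnum_pos {q y : ℝ} (hq0 : 0 < q) (hq1 : q < 1) (hy : 0 < y) : 0 < qnum q y :=
  div_pos (sub_pos.2 (Real.rpow_lt_one hq0.le hq1 hy)) (sub_pos.2 hq1)

theorem qnum_le_qnum {q y y' : ℝ} (hq0 : 0 < q) (hq1 : q < 1) (h : y ≤ y') :
    qnum q y ≤ qnum q y' := by
  have := Real.rpow_le_rpow_of_exponent_ge hq0 hq1.le h
  exact div_le_div_of_nonneg_right (by linarith) (sub_pos.2 hq1).le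

theorem qnum_le_inv_one_sub {q : ℝ} (hq0 : 0 ≤ q) (hq1 : q < 1) (y : ℝ) :
    qnum q y ≤ (1 - q)⁻¹ := by
  rw [← one_div]
  have := Real.rpow_nonneg hq0 y
  exact div_le_div_of_nonneg_right (by linarith) (sub_pos.2 hq1).le

/-- The summand of `l_{q,Φ}^{(r)}(s, x | w; a)` at `m`, without the factor `2^r`. -/
noncomputable def barnesTerm {N r : ℕ} (Φ : ZMod N → ℂ) (q x : ℝ) (w a : Fin r → ℝ) (s : ℂ)
    (m : Fin r → ℕ) : ℂ :=
  (∏ j, Φ ((m j : ℕ) : ZMod N)) * (-1 : ℂ) ^ (∑ i, m i) * ((q ^ (∑ i, a i * m i) : ℝ) : ℂ) *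
    ((qnum q (x + ∑ i, w i * m i) : ℝ) : ℂ) ^ (-s)

theorem barnesTerm_eq_prod_mul {N r : ℕ} (Φ : ZMod N → ℂ) {q : ℝ} (hq : 0 < q) (x : ℝ)
    (w a : Fin r → ℝ) (s : ℂ) (m : Fin r → ℕ) :
    barnesTerm Φ q x w a s m =
      (∏ j, Φ (m j) * (-((q ^ a j : ℝ) : ℂ)) ^ m j) *
        ((qnum q (x + ∑ i, w i * m i) : ℝ) : ℂ) ^ (-s) := by
  rw [barnesTerm, prod_mul_neg_rpow_pow Φ hq]

theorem summable_norm_barnesTerm {N r : ℕ} [NeZero N] (Φ : ZMod N → ℂ) {q x : ℝ} (hq0 : 0 < q)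
    (hq1 : q < 1) (hx : 0 < x) {w a : Fin r → ℝ} (hw : ∀ i, 0 ≤ w i) (ha : ∀ i, 0 < a i)
    (s : ℂ) : Summable fun m => ‖barnesTerm Φ q x w a s m‖ := by
  set K := max (qnum q x ^ (-s).re) ((1 - q)⁻¹ ^ (-s).re)
  have hpow : ∀ m : Fin r → ℕ, ‖((qnum q (x + ∑ i, w i * m i) : ℝ) : ℂ) ^ (-s)‖ ≤ K := by
    intro m
    have hle : qnum q x ≤ qnum q (x + ∑ i, w i * m i) := qnum_le_qnum hq0 hq1
      (le_add_of_nonneg_right (sum_nonneg fun i _ => mul_nonneg (hw i) (Nat.cast_nonneg _)))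
    rw [Complex.norm_cpow_eq_rpow_re_of_pos ((qnum_pos hq0 hq1 hx).trans_le hle)]
    exact rpow_le_max_of_mem_Icc (qnum_pos hq0 hq1 hx) ⟨hle, qnum_le_inv_one_sub hq0.le hq1 _⟩ _
  refine .of_nonneg_of_le (fun _ => norm_nonneg _) (fun m => ?_)
    ((summable_prod_pi_of_nonneg _ (fun _ _ => norm_nonneg _)
      fun j => summable_norm_mul_pow_of_zmod Φ (norm_neg_rpow_lt_one hq0 hq1 (ha j))).mul_right K)
  rw [barnesTerm_eq_prod_mul Φ hq0, norm_mul, norm_prod]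
  exact mul_le_mul_of_nonneg_left (hpow m) (prod_nonneg fun _ _ => norm_nonneg _)

theorem barnesTerm_neg_natCast {N r : ℕ} (Φ : ZMod N → ℂ) {q : ℝ} (hq : 0 < q) (x : ℝ)
    (w a : Fin r → ℝ) (n : ℕ) (m : Fin r → ℕ) :
    barnesTerm Φ q x w a (-n) m =
      ∑ l ∈ range (n + 1), ((1 - (q : ℂ)) ^ n)⁻¹ * (n.choose l : ℂ) * (-1) ^ l *
        ((q ^ ((l : ℝ) * x) : ℝ) : ℂ) *
          ∏ j, Φ (m j) * (-((q ^ ((l : ℝ) * w j + a j) : ℝ) : ℂ)) ^ m j := by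
  rw [barnesTerm_eq_prod_mul Φ hq, neg_neg, Complex.cpow_natCast, ← Complex.ofReal_pow,
    qnum_pow hq.le, mul_sum]
  push_cast
  rw [mul_sum]
  refine sum_congr rfl fun l _ => ?_
  have hexp : q ^ (∑ i, a i * m i) * q ^ ((l : ℝ) * (x + ∑ i, w i * m i)) =
      q ^ ((l : ℝ) * x) * q ^ (∑ i, ((l : ℝ) * w i + a i) * m i) := by
    rw [← Real.rpow_add hq, ← Real.rpow_add hq]
    simp only [mul_add, add_mul, sum_add_distrib, mul_sum]
    ring_nf
  have hexpC := congrArg ((↑) : ℝ → ℂ) hexp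
  push_cast at hexpC
  rw [prod_mul_neg_rpow_pow Φ hq, prod_mul_neg_rpow_pow Φ hq]
  linear_combination ((1 - (q : ℂ)) ^ n)⁻¹ * (n.choose l : ℂ) * (-1) ^ l * (∏ j, Φ (m j)) *
    (-1 : ℂ) ^ (∑ i, m i) * hexpC

theorem hasSum_prod_mul_neg_rpow_pow {N r : ℕ} [NeZero N] (hN : Odd N) (Φ : ZMod N → ℂ) {q : ℝ}
    (hq0 : 0 < q) (hq1 : q < 1) {c : Fin r → ℝ} (hc : ∀ j, 0 < c j) :
    HasSum (fun m : Fin r → ℕ => ∏ j, Φ (m j) * (-((q ^ c j : ℝ) : ℂ)) ^ m j)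
      ((∑ b : Fin r → Fin N, (∏ i, Φ (b i : ℕ)) * (-1 : ℂ) ^ (∑ i, (b i : ℕ)) *
          ((q ^ (∑ i, c i * (b i : ℕ)) : ℝ) : ℂ)) / ∏ j, ((1 + q ^ (c j * N) : ℝ) : ℂ)) := by
  have hz := fun j => norm_neg_rpow_lt_one hq0 hq1 (hc j)
  have h := hasSum_prod_pi _ fun j => summable_norm_mul_pow_of_zmod Φ (hz j)
  simp only [(hasSum_mul_pow_of_zmod Φ (hz _)).tsum_eq, prod_div_distrib, Fintype.prod_sum] at h
  refine Eq.subst (motive := HasSum _) ?_ h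
  congr 1
  · exact sum_congr rfl fun b _ => prod_mul_neg_rpow_pow Φ hq0 c fun i => b i
  · refine prod_congr rfl fun j _ => ?_
    rw [hN.neg_pow, sub_neg_eq_add, Real.rpow_mul_natCast hq0.le]
    norm_cast

theorem stmt_13_general (f : ℕ) (hf : 0 < f) (hfodd : Odd f) (χ : DirichletCharacter ℂ f)
    (r : ℕ) (q : ℝ) (hq0 : 0 < q) (hq1 : q < 1)
    (x : ℝ) (hx : 0 < x) (w a : Fin r → ℝ) (hw : ∀ i, 0 < w i) (ha : ∀ i, 0 < a i) :
    (∀ s : ℂ,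
      Summable (fun m : Fin r → ℕ =>
        ‖(∏ j, χ ((m j : ℕ) : ZMod f)) * (-1 : ℂ) ^ (∑ i, m i) *
          ((q ^ (∑ i, a i * m i) : ℝ) : ℂ) *
            ((qnum q (x + ∑ i, w i * m i) : ℝ) : ℂ) ^ (-s)‖)) ∧
    ∀ n : ℕ,
      (2 : ℂ) ^ r * ∑' m : Fin r → ℕ,
          (∏ j, χ ((m j : ℕ) : ZMod f)) * (-1 : ℂ) ^ (∑ i, m i) *
            ((q ^ (∑ i, a i * m i) : ℝ) : ℂ) *
              ((qnum q (x + ∑ i, w i * m i) : ℝ) : ℂ) ^ (-(-(n : ℂ))) =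
        (2 : ℂ) ^ r / ((1 : ℂ) - (q : ℂ)) ^ n *
          ∑ l ∈ range (n + 1),
            (n.choose l : ℂ) * (-1) ^ l * ((q ^ ((l : ℝ) * x) : ℝ) : ℂ) *
              ∑ b : Fin r → Fin f,
                (∏ i, χ ((b i : ℕ) : ZMod f)) * (-1 : ℂ) ^ (∑ i, (b i : ℕ)) *
                  ((q ^ (∑ i, ((l : ℝ) * w i + a i) * (b i : ℕ)) : ℝ) : ℂ) /
                    ∏ j, (((1 + q ^ (((l : ℝ) * w j + a j) * f) : ℝ)) : ℂ) := by
  have : NeZero f := ⟨hf.ne'⟩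
  refine ⟨summable_norm_barnesTerm χ hq0 hq1 hx (fun i => (hw i).le) ha, fun n => ?_⟩
  have hsum := hasSum_sum fun l (_ : l ∈ range (n + 1)) =>
    (hasSum_prod_mul_neg_rpow_pow hfodd χ hq0 hq1 (c := fun j => (l : ℝ) * w j + a j)
      fun j => add_pos_of_nonneg_of_pos (mul_nonneg l.cast_nonneg (hw j).le) (ha j)).mul_left
      (((1 - (q : ℂ)) ^ n)⁻¹ * (n.choose l : ℂ) * (-1) ^ l * ((q ^ ((l : ℝ) * x) : ℝ) : ℂ))
  change (2 : ℂ) ^ r * ∑' m, barnesTerm χ q x w a (-n) m = _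
  rw [funext (barnesTerm_neg_natCast χ hq0 x w a n), hsum.tsum_eq, mul_sum, mul_sum]
  refine sum_congr rfl fun l _ => ?_
  rw [← sum_div]
  ring

theorem stmt_13 (f : ℕ) (hf : 0 < f) (hfodd : Odd f) (χ : DirichletCharacter ℂ f)
    (r : ℕ) (hr : 1 ≤ r) (q : ℝ) (hq0 : 0 < q) (hq1 : q < 1)
    (x : ℝ) (hx : 0 < x) (w a : Fin r → ℝ) (hw : ∀ i, 0 < w i) (ha : ∀ i, 0 < a i) :
    (∀ s : ℂ,
      Summable (fun m : Fin r → ℕ =>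
        ‖(∏ j, χ ((m j : ℕ) : ZMod f)) * (-1 : ℂ) ^ (∑ i, m i) *
          ((q ^ (∑ i, a i * m i) : ℝ) : ℂ) *
            ((qnum q (x + ∑ i, w i * m i) : ℝ) : ℂ) ^ (-s)‖)) ∧
    ∀ n : ℕ,
      (2 : ℂ) ^ r * ∑' m : Fin r → ℕ,
          (∏ j, χ ((m j : ℕ) : ZMod f)) * (-1 : ℂ) ^ (∑ i, m i) *
            ((q ^ (∑ i, a i * m i) : ℝ) : ℂ) *
              ((qnum q (x + ∑ i, w i * m i) : ℝ) : ℂ) ^ (-(-(n : ℂ))) =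
        (2 : ℂ) ^ r / ((1 : ℂ) - (q : ℂ)) ^ n *
          ∑ l ∈ range (n + 1),
            (n.choose l : ℂ) * (-1) ^ l * ((q ^ ((l : ℝ) * x) : ℝ) : ℂ) *
              ∑ b : Fin r → Fin f,
                (∏ i, χ ((b i : ℕ) : ZMod f)) * (-1 : ℂ) ^ (∑ i, (b i : ℕ)) *
                  ((q ^ (∑ i, ((l : ℝ) * w i + a i) * (b i : ℕ)) : ℝ) : ℂ) /
                    ∏ j, (((1 + q ^ (((l : ℝ) * w j + a j) * f) : ℝ)) : ℂ) :=
  stmt_13_general f hf hfodd χ r q hq0 hq1 x hx w a hw ha
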